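/- arXiv:1611.05818 — 2 statements merged into one kernel-verified Lean document; each statement's English description precedes it below -/
import Mathlib

section
/- Let P be a nonempty closed subset of 2^ω with tree T_P, let σ ∈ T_P, and let n ≥ |σ|. If every extension τ ⪰ σ with τ ∈ T_P↾n satisfies θ_P(τ) = θ_P(σ) + ℓ, then σ has exactly 2^ℓ extensions in T_P↾n. -/
open MeasureTheory Filter

noncomputable section

/-- The cylinder (basic clopen set) determined by a finite binary string. -/
def cyl (σ : List Bool) : Set (ℕ → Bool) :=
  {X | ∀ i, i < σ.length → X i = σ.getD i false}

/-- σ is an extendible node of P, i.e. σ ∈ T_P. -/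
def extn (P : Set (ℕ → Bool)) (σ : List Bool) : Prop :=
  (cyl σ ∩ P).Nonempty

/-- The level-n strings of the tree of extendible nodes, T_P ↾ n. -/
def level (P : Set (ℕ → Bool)) (n : ℕ) : Set (List Bool) :=
  {σ | σ.length = n ∧ extn P σ}

/-- #(T_P ↾ n). -/
def levelCard (P : Set (ℕ → Bool)) (n : ℕ) : ℕ :=
  (level P n).ncard

/-- The clopen set [T_P ↾ n] generated by the level-n extendible nodes. -/
def levelUnion (P : Set (ℕ → Bool)) (n : ℕ) : Set (ℕ → Bool) :=
  ⋃ σ ∈ level P n, cyl σ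

/-- The prefix of σ of length m+1 with its last bit flipped, i.e. (σ↾(m+1))^↷. -/
def flipAt (σ : List Bool) (m : ℕ) : List Bool :=
  σ.take m ++ [!σ.getD m false]

/-- θ_P(σ): the number of initial segments of σ whose last-bit-flipped sibling is in T_P. -/
def theta (P : Set (ℕ → Bool)) (σ : List Bool) : ℕ :=
  {m | m < σ.length ∧ extn P (flipAt σ m)}.ncard

/-- The number of extensions of σ in T_P ↾ n. -/
def extCard (P : Set (ℕ → Bool)) (σ : List Bool) (n : ℕ) : ℕ :=
  {τ | τ.length = n ∧ extn P τ ∧ σ <+: τ}.ncard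

/-- X ↾ n as a finite string. -/
def prefixList (X : ℕ → Bool) (n : ℕ) : List Bool :=
  List.ofFn (fun i : Fin n => X i)

/-- Interleaving X ⊕ Y of two infinite sequences. -/
def seqInterleave (X Y : ℕ → Bool) : ℕ → Bool :=
  fun n => if n % 2 = 0 then X (n / 2) else Y (n / 2)

/-- Interleaving σ ⊕ τ of two finite strings (of equal length). -/
def interleave : List Bool → List Bool → List Bool
  | a :: σ, b :: τ => a :: b :: interleave σ τ
  | _, _ => []

/-- The product P₀ ⊗ P₁ = {X ⊕ Y : X ∈ P₀, Y ∈ P₁}. -/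
def prodClass (P₀ P₁ : Set (ℕ → Bool)) : Set (ℕ → Bool) :=
  {Z | ∃ X ∈ P₀, ∃ Y ∈ P₁, Z = seqInterleave X Y}

/-! Passing from σ to a one-bit extension σ ++ [b] raises θ_P by one exactly when the sibling
σ ++ [!b] is also extendible, i.e. exactly when the tree T_P branches at σ. So if θ_P takes one
value c on all level-n extensions of σ, every branch from σ down to level n meets exactly
c - θ_P(σ) branching nodes, and induction on n - |σ| counts 2 ^ (c - θ_P(σ)) such extensions. -/

lemma cyl_anti {σ τ : List Bool} (h : σ <+: τ) : cyl τ ⊆ cyl σ := by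
  obtain ⟨t, rfl⟩ := h
  intro X hX i hi
  rw [hX i (by rw [List.length_append]; omega), List.getD_append _ _ _ _ hi]

lemma extn_of_prefix {P : Set (ℕ → Bool)} {σ τ : List Bool} (h : σ <+: τ)
    (hτ : extn P τ) : extn P σ := by
  obtain ⟨X, hX, hXP⟩ := hτ
  exact ⟨X, cyl_anti h hX, hXP⟩

lemma mem_cyl_append_self {X : ℕ → Bool} {σ : List Bool} (hX : X ∈ cyl σ) :
    X ∈ cyl (σ ++ [X σ.length]) := by
  intro i hi
  rw [List.length_append, List.length_singleton] at hi
  rcases Nat.lt_or_ge i σ.length with hi' | hi'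
  · rw [List.getD_append _ _ _ _ hi', hX i hi']
  · obtain rfl : i = σ.length := by omega
    simp

lemma exists_extn_append {P : Set (ℕ → Bool)} {σ : List Bool} (hσ : extn P σ) :
    ∃ b, extn P (σ ++ [b]) := by
  obtain ⟨X, hX, hXP⟩ := hσ
  exact ⟨X σ.length, X, mem_cyl_append_self hX, hXP⟩

lemma exists_extn_extension {P : Set (ℕ → Bool)} {σ : List Bool} {n : ℕ}
    (hσ : extn P σ) (hn : σ.length ≤ n) : ∃ τ, τ.length = n ∧ extn P τ ∧ σ <+: τ := by
  induction h : n - σ.length generalizing σ with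
  | zero => exact ⟨σ, by omega, hσ, List.prefix_refl σ⟩
  | succ d ih =>
    obtain ⟨b, hb⟩ := exists_extn_append hσ
    obtain ⟨τ, hτn, hτ, hbτ⟩ := ih hb (by simp; omega) (by simp; omega)
    exact ⟨τ, hτn, hτ, (σ.prefix_append [b]).trans hbτ⟩

lemma prefix_append_or_prefix_append_not {σ τ : List Bool} (h : σ <+: τ)
    (hl : σ.length < τ.length) (b : Bool) : σ ++ [b] <+: τ ∨ σ ++ [!b] <+: τ := by
  obtain ⟨_ | ⟨a, t⟩, rfl⟩ := h
  · simp at hl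
  · cases a <;> cases b <;> simp

lemma not_prefix_append_not {σ τ : List Bool} {b : Bool} (h : σ ++ [b] <+: τ) :
    ¬ σ ++ [!b] <+: τ := by
  intro h'
  have := (List.prefix_of_prefix_length_le h h' (by simp)).eq_of_length (by simp)
  simp at this

lemma flipAt_eq_of_prefix {σ τ : List Bool} {m : ℕ} (h : σ <+: τ)
    (hm : m < σ.length) : flipAt τ m = flipAt σ m := by
  obtain ⟨t, rfl⟩ := h
  rw [flipAt, flipAt, List.take_append_of_le_length hm.le, List.getD_append _ _ _ _ hm]

lemma flipAt_append_length (σ : List Bool) (b : Bool) :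
    flipAt (σ ++ [b]) σ.length = σ ++ [!b] := by
  simp [flipAt]

section

open Classical

lemma theta_eq_count (P : Set (ℕ → Bool)) (σ : List Bool) :
    theta P σ = Nat.count (fun m => extn P (flipAt σ m)) σ.length := by
  rw [Nat.count_eq_card_filter_range, ← Set.ncard_coe_finset, theta]
  congr 1
  ext m
  simp

lemma count_flipAt_of_prefix (P : Set (ℕ → Bool)) {σ τ : List Bool} (h : σ <+: τ) :
    Nat.count (fun m => extn P (flipAt τ m)) σ.length = theta P σ := by
  rw [theta_eq_count]
  exact le_antisymm
    (Nat.count_mono_left fun m hm => by rw [flipAt_eq_of_prefix h hm]; exact id)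
    (Nat.count_mono_left fun m hm => by rw [flipAt_eq_of_prefix h hm]; exact id)

lemma theta_mono {P : Set (ℕ → Bool)} {σ τ : List Bool} (h : σ <+: τ) :
    theta P σ ≤ theta P τ := by
  rw [← count_flipAt_of_prefix P h, theta_eq_count]
  exact Nat.count_monotone _ h.length_le

lemma theta_append (P : Set (ℕ → Bool)) (σ : List Bool) (b : Bool) :
    theta P (σ ++ [b]) = theta P σ + if extn P (σ ++ [!b]) then 1 else 0 := by
  rw [theta_eq_count, List.length_append, List.length_singleton, Nat.count_succ,
    count_flipAt_of_prefix P (σ.prefix_append [b]), flipAt_append_length]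

end

lemma extCard_length_self {P : Set (ℕ → Bool)} {σ : List Bool} (hσ : extn P σ) :
    extCard P σ σ.length = 1 := by
  have hsingleton : {τ | τ.length = σ.length ∧ extn P τ ∧ σ <+: τ} = {σ} := by
    ext τ
    exact ⟨fun ⟨hτn, _, hστ⟩ => (hστ.eq_of_length hτn.symm).symm,
      by rintro rfl; exact ⟨rfl, hσ, List.prefix_refl _⟩⟩
  rw [extCard, hsingleton, Set.ncard_singleton]

lemma extCard_eq_zero {P : Set (ℕ → Bool)} {σ : List Bool} (hσ : ¬ extn P σ) (n : ℕ) :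
    extCard P σ n = 0 := by
  have hempty : {τ | τ.length = n ∧ extn P τ ∧ σ <+: τ} = ∅ :=
    Set.eq_empty_of_forall_notMem fun τ ⟨_, hτ, hστ⟩ => hσ (extn_of_prefix hστ hτ)
  rw [extCard, hempty, Set.ncard_empty]

lemma extCard_eq_add (P : Set (ℕ → Bool)) {σ : List Bool} {n : ℕ} (hn : σ.length < n)
    (b : Bool) : extCard P σ n = extCard P (σ ++ [b]) n + extCard P (σ ++ [!b]) n := by
  have hfin : ∀ ρ : List Bool, {τ | τ.length = n ∧ extn P τ ∧ ρ <+: τ}.Finite :=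
    fun _ => (List.finite_length_eq Bool n).subset fun _ hτ => hτ.1
  have hdisj : Disjoint {τ | τ.length = n ∧ extn P τ ∧ σ ++ [b] <+: τ}
      {τ | τ.length = n ∧ extn P τ ∧ σ ++ [!b] <+: τ} :=
    Set.disjoint_left.2 fun τ h h' => not_prefix_append_not h.2.2 h'.2.2
  rw [extCard, extCard, extCard, ← Set.ncard_union_eq hdisj (hfin _) (hfin _)]
  congr 1
  ext τ
  simp only [Set.mem_ofPred_eq, Set.mem_union]
  constructor
  · rintro ⟨hτn, hτ, hστ⟩
    exact (prefix_append_or_prefix_append_not hστ (by omega) b).imp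
      (fun h => ⟨hτn, hτ, h⟩) (fun h => ⟨hτn, hτ, h⟩)
  · rintro (⟨hτn, hτ, h⟩ | ⟨hτn, hτ, h⟩) <;>
      exact ⟨hτn, hτ, (σ.prefix_append _).trans h⟩

open Classical in
theorem extCard_eq_two_pow_of_theta_eq {P : Set (ℕ → Bool)} {σ : List Bool} {n c : ℕ}
    (hσ : extn P σ) (hn : σ.length ≤ n)
    (h : ∀ τ : List Bool, τ.length = n → extn P τ → σ <+: τ → theta P τ = c) :
    extCard P σ n = 2 ^ (c - theta P σ) := by
  induction hd : n - σ.length generalizing σ with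
  | zero =>
    obtain rfl : n = σ.length := by omega
    rw [extCard_length_self hσ, h σ rfl hσ (List.prefix_refl σ), Nat.sub_self, pow_zero]
  | succ d ih =>
    have hchild : ∀ b, extn P (σ ++ [b]) →
        extCard P (σ ++ [b]) n = 2 ^ (c - theta P (σ ++ [b])) := fun b hb =>
      ih hb (by simp; omega) (fun τ hτn hτ hbτ => h τ hτn hτ ((σ.prefix_append _).trans hbτ))
        (by simp; omega)
    obtain ⟨b, hb⟩ := exists_extn_append hσ
    rw [extCard_eq_add P (by omega) b, hchild b hb, theta_append]
    by_cases hb' : extn P (σ ++ [!b])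
    · obtain ⟨τ, hτn, hτ, hbτ⟩ := exists_extn_extension (n := n) hb (by simp; omega)
      -- keeps the ℕ-subtraction `c - theta P σ` in the exponent from truncating
      have hc : theta P σ + 1 ≤ c := by
        have := theta_mono (P := P) hbτ
        rwa [theta_append, if_pos hb', h τ hτn hτ ((σ.prefix_append _).trans hbτ)] at this
      rw [hchild _ hb', theta_append, Bool.not_not, if_pos hb', if_pos hb, ← two_mul,
        ← pow_succ']
      congr 1
      omega
    · rw [extCard_eq_zero hb', if_neg hb', add_zero, add_zero]

theorem stmt4_general (P : Set (ℕ → Bool))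
    (σ : List Bool) (hσ : extn P σ) (n ℓ : ℕ) (hn : σ.length ≤ n)
    (h : ∀ τ : List Bool, τ.length = n → extn P τ → σ <+: τ →
      theta P τ = theta P σ + ℓ) :
    extCard P σ n = 2 ^ ℓ := by
  rw [extCard_eq_two_pow_of_theta_eq hσ hn h, Nat.add_sub_cancel_left]

theorem stmt4 (P : Set (ℕ → Bool)) (hPne : P.Nonempty) (hPc : IsClosed P)
    (σ : List Bool) (hσ : extn P σ) (n ℓ : ℕ) (hn : σ.length ≤ n)
    (h : ∀ τ : List Bool, τ.length = n → extn P τ → σ <+: τ →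
      theta P τ = theta P σ + ℓ) :
    extCard P σ n = 2 ^ ℓ :=
  stmt4_general P σ hσ n ℓ hn h
end
end

section
/- If P is a separating-set homogeneous closed subset of 2^ω and Q ⊆ P is a nonempty closed set, then the sequence (#(T_Q↾n) / #(T_P↾n))_{n∈ω} is nonincreasing in n; hence the limit lim_{n→∞} #(T_Q↾n)/#(T_P↾n) exists. -/
open MeasureTheory Filter

noncomputable section

lemma ncard_prod' {α β : Type*} (s : Set α) (t : Set β) :
    (s ×ˢ t).ncard = s.ncard * t.ncard := by
  rw [← Nat.card_coe_set_eq, ← Nat.card_coe_set_eq, ← Nat.card_coe_set_eq,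
    Nat.card_congr (Equiv.Set.prod s t), Nat.card_prod]

lemma level_finite (P : Set (ℕ → Bool)) (n : ℕ) : (level P n).Finite :=
  (List.finite_length_eq Bool n).subset (fun _ h => h.1)

lemma extn_take {P : Set (ℕ → Bool)} {τ : List Bool} (h : extn P τ) (m : ℕ) :
    extn P (τ.take m) := by
  obtain ⟨X, hX1, hX2⟩ := h
  refine ⟨X, fun i hi => ?_, hX2⟩
  rw [List.length_take] at hi
  have hi' : i < τ.length := lt_of_lt_of_le hi (min_le_right _ _)
  have him : i < m := lt_of_lt_of_le hi (min_le_left _ _)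
  rw [List.getD_eq_getElem?_getD, List.getElem?_take_of_lt him,
    ← List.getD_eq_getElem?_getD]
  exact hX1 i hi'

lemma take_append_getD {τ : List Bool} {n : ℕ} (h : τ.length = n + 1) :
    τ.take n ++ [τ.getD n false] = τ := by
  have hn : n < τ.length := by omega
  rw [List.getD_eq_getElem _ _ hn]
  conv_rhs => rw [← List.take_append_drop n τ]
  congr 1
  rw [List.drop_eq_getElem_cons hn]
  congr 1
  have : τ.length ≤ n + 1 := by omega
  simpa using List.drop_eq_nil_of_le this

lemma extn_of_mem {P : Set (ℕ → Bool)} {X : ℕ → Bool} (hX : X ∈ P) (n : ℕ) :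
    extn P (prefixList X n) := by
  refine ⟨X, fun i hi => ?_, hX⟩
  simp only [prefixList, List.length_ofFn] at hi
  rw [List.getD_eq_getElem _ _ (by simpa [prefixList] using hi)]
  simp [prefixList]

lemma level_nonempty {P : Set (ℕ → Bool)} (hP : P.Nonempty) (n : ℕ) :
    (level P n).Nonempty := by
  obtain ⟨X, hX⟩ := hP
  exact ⟨prefixList X n, by simp [level, prefixList], extn_of_mem hX n⟩

lemma extn_mono {P Q : Set (ℕ → Bool)} (h : Q ⊆ P) {σ : List Bool} (hσ : extn Q σ) :
    extn P σ := by
  obtain ⟨X, hX1, hX2⟩ := hσ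
  exact ⟨X, hX1, h hX2⟩

theorem stmt18 (P : Set (ℕ → Bool)) (hPne : P.Nonempty) (hPc : IsClosed P)
    (hhom : ∀ σ τ : List Bool, extn P σ → extn P τ → σ.length = τ.length →
      ∀ i : Bool, (extn P (σ ++ [i]) ↔ extn P (τ ++ [i])))
    (Q : Set (ℕ → Bool)) (hQne : Q.Nonempty) (hQc : IsClosed Q) (hQP : Q ⊆ P) :
    (∀ n : ℕ, levelCard Q (n + 1) * levelCard P n ≤ levelCard Q n * levelCard P (n + 1)) ∧
    ∃ L : ℝ, Tendsto (fun n => (levelCard Q n : ℝ) / (levelCard P n : ℝ)) atTop (nhds L) := by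
  have key : ∀ n : ℕ, levelCard Q (n + 1) * levelCard P n ≤ levelCard Q n * levelCard P (n + 1) := by
    intro n
    obtain ⟨σ0, hσ0len, hσ0ext⟩ := level_nonempty hPne n
    set S : Set Bool := {i | extn P (σ0 ++ [i])} with hS
    -- level P (n+1) is the image of (level P n) ×ˢ S under append
    have hPlev : level P (n + 1) = (fun p : List Bool × Bool => p.1 ++ [p.2]) '' ((level P n) ×ˢ S) := by
      ext τ
      constructor
      · rintro ⟨hlen, hext⟩
        have hdec := take_append_getD hlen
        have htake : τ.take n ∈ level P n := by
          refine ⟨by simp [hlen], extn_take hext n⟩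
        have hext' : extn P (τ.take n ++ [τ.getD n false]) := by rwa [hdec]
        have hSb : τ.getD n false ∈ S := by
          have := (hhom (τ.take n) σ0 htake.2 hσ0ext (by simp [hlen, hσ0len]) (τ.getD n false)).mp hext'
          exact this
        exact ⟨(τ.take n, τ.getD n false), ⟨htake, hSb⟩, hdec⟩
      · rintro ⟨⟨σ, i⟩, ⟨⟨hσlen, hσext⟩, hi⟩, rfl⟩
        refine ⟨by simp [hσlen], ?_⟩
        exact (hhom σ0 σ hσ0ext hσext (by simp [hσ0len, hσlen]) i).mp hi
    have hinj : Set.InjOn (fun p : List Bool × Bool => p.1 ++ [p.2]) ((level P n) ×ˢ S) := by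
      rintro ⟨σ, i⟩ ⟨hσ, _⟩ ⟨σ', i'⟩ ⟨hσ', _⟩ h
      simp only at h
      obtain ⟨h1, h2⟩ := List.append_inj h (by simp [hσ.1, hσ'.1])
      simp_all
    have hPcardEq : levelCard P (n + 1) = levelCard P n * S.ncard := by
      rw [levelCard, hPlev, Set.ncard_image_of_injOn hinj, ncard_prod']; rfl
    -- Q-level injection
    have hQsub : (fun τ : List Bool => (τ.take n, τ.getD n false)) '' level Q (n + 1) ⊆ (level Q n) ×ˢ S := by
      rintro _ ⟨τ, ⟨hlen, hext⟩, rfl⟩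
      refine ⟨⟨by simp [hlen], extn_take hext n⟩, ?_⟩
      have hdec := take_append_getD hlen
      have hPext : extn P τ := extn_mono hQP hext
      have htakeP : extn P (τ.take n) := extn_take hPext n
      have hext' : extn P (τ.take n ++ [τ.getD n false]) := by rwa [hdec]
      exact (hhom (τ.take n) σ0 htakeP hσ0ext (by simp [hlen, hσ0len]) (τ.getD n false)).mp hext'
    have hQinj : Set.InjOn (fun τ : List Bool => (τ.take n, τ.getD n false)) (level Q (n + 1)) := by
      intro τ hτ τ' hτ' h
      simp only [Prod.mk.injEq] at h
      rw [← take_append_getD hτ.1, ← take_append_getD hτ'.1, h.1, h.2]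
    have hQcard : levelCard Q (n + 1) ≤ levelCard Q n * S.ncard := by
      calc levelCard Q (n + 1)
          = ((fun τ : List Bool => (τ.take n, τ.getD n false)) '' level Q (n + 1)).ncard := by
            rw [Set.ncard_image_of_injOn hQinj]; rfl
        _ ≤ ((level Q n) ×ˢ S).ncard := by
            refine Set.ncard_le_ncard hQsub ?_
            exact (level_finite Q n).prod (Set.toFinite S)
        _ = levelCard Q n * S.ncard := ncard_prod' _ _
    calc levelCard Q (n + 1) * levelCard P n
        ≤ (levelCard Q n * S.ncard) * levelCard P n := Nat.mul_le_mul_right _ hQcard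
      _ = levelCard Q n * (levelCard P n * S.ncard) := by ring
      _ = levelCard Q n * levelCard P (n + 1) := by rw [hPcardEq]
  refine ⟨key, ?_⟩
  have hPpos : ∀ n, 0 < (levelCard P n : ℝ) := by
    intro n
    have : 0 < levelCard P n := (Set.ncard_pos (level_finite P n)).mpr (level_nonempty hPne n)
    exact_mod_cast this
  have hanti : Antitone (fun n => (levelCard Q n : ℝ) / (levelCard P n : ℝ)) := by
    refine antitone_nat_of_succ_le fun n => ?_
    rw [div_le_div_iff₀ (hPpos (n + 1)) (hPpos n)]
    exact_mod_cast key n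
  refine ⟨⨅ n, (levelCard Q n : ℝ) / (levelCard P n : ℝ), ?_⟩
  refine tendsto_atTop_ciInf hanti ⟨0, ?_⟩
  rintro x ⟨n, rfl⟩
  positivity
end
end
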